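/- Let (X, x) be a well-pointed path-connected space, let P_y^x(X) be the space of paths from y to x in X, and P_y(X) the space of paths starting at y. Then the homotopy fiber over y of the retraction X ∨_x S^n → X (collapsing S^n) is homotopy equivalent to P_y(X) ∪_{P_y^x(X)} (P_y^x(X) × S^n), and this space is naturally homotopy equivalent to the half-smash Σ^n (P_y^x(X)₊) = (P_y^x(X)₊) ∧ S^n. Consequently the Goodwillie derivative of the identity functor at (X, x, y) is stably equivalent to the suspension spectrum Σ^∞ P_y^x(X)₊; for x = y this is Σ^∞ ΩX₊. -/

import Mathlib

open ContinuousMap CategoryTheory TopCat.RelativeCWComplex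

noncomputable section

/-- The homotopy fiber of a map `f : A → B` over a point `b : B`. -/
def HoFib {A B : Type} [TopologicalSpace A] [TopologicalSpace B] (f : C(A, B)) (b : B) :
    Type :=
  {p : A × C(unitInterval, B) // p.2 0 = b ∧ p.2 1 = f p.1}

instance {A B : Type} [TopologicalSpace A] [TopologicalSpace B] (f : C(A, B)) (b : B) :
    TopologicalSpace (HoFib f b) :=
  inferInstanceAs (TopologicalSpace {p : A × C(unitInterval, B) // p.2 0 = b ∧ p.2 1 = f p.1})

/-- The `n`-sphere. -/
def SphereN (n : ℕ) : Type :=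
  Metric.sphere (0 : EuclideanSpace ℝ (Fin (n + 1))) 1

instance (n : ℕ) : TopologicalSpace (SphereN n) :=
  inferInstanceAs (TopologicalSpace (Metric.sphere _ _))

/-- The basepoint of the `n`-sphere. -/
def SphereN.pt (n : ℕ) : SphereN n :=
  ⟨EuclideanSpace.single 0 1, by simp⟩

/-- The relation collapsing the basepoints in a binary sum. -/
def Wedge2Rel {A B : Type} (a0 : A) (b0 : B) : (A ⊕ B) → (A ⊕ B) → Prop :=
  fun p q => p = q ∨
    ((p = Sum.inl a0 ∨ p = Sum.inr b0) ∧ (q = Sum.inl a0 ∨ q = Sum.inr b0))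

/-- The wedge (one-point union) of two pointed spaces. -/
def Wedge2 {A B : Type} [TopologicalSpace A] [TopologicalSpace B] (a0 : A) (b0 : B) :
    Type :=
  Quot (Wedge2Rel a0 b0)

instance {A B : Type} [TopologicalSpace A] [TopologicalSpace B] (a0 : A) (b0 : B) :
    TopologicalSpace (Wedge2 a0 b0) :=
  inferInstanceAs (TopologicalSpace (Quot _))

/-- The wedge `X ∨ₓ Sⁿ` of a pointed space with the `n`-sphere. -/
def WedgeSphere (X : Type) [TopologicalSpace X] (x : X) (n : ℕ) : Type :=
  Wedge2 x (SphereN.pt n)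

instance (X : Type) [TopologicalSpace X] (x : X) (n : ℕ) :
    TopologicalSpace (WedgeSphere X x n) :=
  inferInstanceAs (TopologicalSpace (Wedge2 _ _))

/-- The retraction `X ∨ₓ Sⁿ → X` collapsing the sphere to the basepoint. -/
def wedgeSphereRetr (X : Type) [TopologicalSpace X] (x : X) (n : ℕ) :
    C(WedgeSphere X x n, X) where
  toFun := Quot.lift (Sum.elim id fun _ => x) (by
    rintro p q (rfl | ⟨hp | hp, hq | hq⟩) <;> subst_vars <;> rfl)
  continuous_toFun := continuous_quot_lift _ (continuous_id.sumElim continuous_const)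

/-- The based loop space of a pointed space. -/
def LoopSp (X : Type) [TopologicalSpace X] (x : X) : Type :=
  {γ : C(unitInterval, X) // γ 0 = x ∧ γ 1 = x}

instance (X : Type) [TopologicalSpace X] (x : X) : TopologicalSpace (LoopSp X x) :=
  inferInstanceAs (TopologicalSpace {γ : C(unitInterval, X) // γ 0 = x ∧ γ 1 = x})

/-- The half-smash `Σⁿ (Z₊) = (Z × Sⁿ)/(Z × pt)`. -/
def HalfSmash (Z : Type) [TopologicalSpace Z] (n : ℕ) : Type :=
  Quot (fun p q : Z × SphereN n => p = q ∨ (p.2 = SphereN.pt n ∧ q.2 = SphereN.pt n))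

instance (Z : Type) [TopologicalSpace Z] (n : ℕ) : TopologicalSpace (HalfSmash Z n) :=
  inferInstanceAs (TopologicalSpace (Quot _))

/-- The basepoint `x` of `X` is nondegenerate (the inclusion `{x} → X` is a cofibration):
homotopy extension holds for the pair `(X, {x})`. -/
def NondegBasepoint (X : Type) [TopologicalSpace X] (x : X) : Prop :=
  ∀ (Z : Type) (_ : TopologicalSpace Z) (f : C(X, Z)) (h : C(unitInterval, Z)),
    h 0 = f x → ∃ H : C(X × unitInterval, Z), (∀ w, H (w, 0) = f w) ∧ ∀ t, H (x, t) = h t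

/-- The space of paths in `X` starting at `y`. -/
def PathsFrom (X : Type) [TopologicalSpace X] (y : X) : Type :=
  {γ : C(unitInterval, X) // γ 0 = y}

instance (X : Type) [TopologicalSpace X] (y : X) : TopologicalSpace (PathsFrom X y) :=
  inferInstanceAs (TopologicalSpace {γ : C(unitInterval, X) // γ 0 = y})

/-- The space of paths in `X` from `y` to `x`. -/
def PathsFromTo (X : Type) [TopologicalSpace X] (y x : X) : Type :=
  {γ : C(unitInterval, X) // γ 0 = y ∧ γ 1 = x}

instance (X : Type) [TopologicalSpace X] (y x : X) :
    TopologicalSpace (PathsFromTo X y x) :=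
  inferInstanceAs (TopologicalSpace {γ : C(unitInterval, X) // γ 0 = y ∧ γ 1 = x})

/-- The adjunction space `P_y(X) ∪_{P_y^x(X)} (P_y^x(X) × Sⁿ)`, gluing `(γ, basepoint)`
to `γ`. -/
def PathsGlue (X : Type) [TopologicalSpace X] (y x : X) (n : ℕ) : Type :=
  Quot (fun p q : PathsFrom X y ⊕ (PathsFromTo X y x × SphereN n) =>
    p = q ∨ ∃ γ : PathsFromTo X y x,
      p = Sum.inr (γ, SphereN.pt n) ∧ q = Sum.inl ⟨γ.1, γ.2.1⟩)

instance (X : Type) [TopologicalSpace X] (y x : X) (n : ℕ) :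
    TopologicalSpace (PathsGlue X y x n) :=
  inferInstanceAs (TopologicalSpace (Quot _))


/-! Over `X` a point of the homotopy fibre is just a path in `P_y(X)`, over `Sⁿ` a point of
`P_y^x(X) × Sⁿ`, and the two pieces meet along `P_y^x(X)`: as a set the fibre is the glued
space. The topologies need not agree, since the product of the wedge's quotient topology with a path
space need not be a quotient, so the inverse is only built up to homotopy. Well-pointedness
gives a deformation `rho` of `X` sending a halo of `x`, which contains `closure {x}`, to `x`;
appending to each path the `rho`-track of its endpoint makes the inverse continuous, and the
partial tracks give the homotopies.

`P_y(X)` is contractible (shrink each path back to `y`), so collapsing it maps the glued space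
to the half-smash. A homotopy inverse pinches a halo of the basepoint of `Sⁿ` onto the
basepoint and, over the pinched region, shrinks the path back to `y` instead; the halo on `Sⁿ`
comes from sliding points along great circles towards the basepoint. -/

open Set unitInterval Topology

theorem ContinuousMap.homotopic_of_curry {A B : Type} [TopologicalSpace A] [TopologicalSpace B]
    {f₀ f₁ : C(A, B)} (F : C(A, C(I, B))) (h₀ : ∀ a, F a 0 = f₀ a) (h₁ : ∀ a, F a 1 = f₁ a) :
    f₀.Homotopic f₁ :=
  ⟨{ toContinuousMap := F.uncurry.comp ContinuousMap.prodSwap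
     map_zero_left := h₀
     map_one_left := h₁ }⟩

/-- The components `(rho, tau)` of a retraction `X × I → X × {0} ∪ {x} × I`. -/
structure BasepointNDR (X : Type) [TopologicalSpace X] (x : X) where
  rho : C(X × I, X)
  tau : C(X × I, I)
  rho_zero : ∀ a, rho (a, 0) = a
  rho_basepoint : ∀ t, rho (x, t) = x
  tau_basepoint : ∀ t, tau (x, t) = t
  rho_eq_of_tau_ne_zero : ∀ p, tau p ≠ 0 → rho p = x

theorem NondegBasepoint.nonempty_basepointNDR {X : Type} [TopologicalSpace X] {x : X}
    (h : NondegBasepoint X x) : Nonempty (BasepointNDR X x) := by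
  obtain ⟨H, hH₀, hHx⟩ := h {p : X × I // p.2 = 0 ∨ p.1 = x} inferInstance
    ⟨fun a => ⟨(a, 0), .inl rfl⟩, by fun_prop⟩ ⟨fun t => ⟨(x, t), .inr rfl⟩, by fun_prop⟩ rfl
  exact ⟨{ rho := ⟨fun p => (H p).1.1, by fun_prop⟩
           tau := ⟨fun p => (H p).1.2, by fun_prop⟩
           rho_zero := fun a => congrArg (·.1.1) (hH₀ a)
           rho_basepoint := fun t => congrArg (·.1.1) (hHx t)
           tau_basepoint := fun t => congrArg (·.1.2) (hHx t)
           rho_eq_of_tau_ne_zero := fun p hp => (H p).2.resolve_left hp }⟩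

namespace BasepointNDR

variable {X : Type} [TopologicalSpace X] {x : X} (d : BasepointNDR X x)

theorem tau_zero (a : X) : d.tau (a, 0) = 0 := by
  by_contra h
  have ha : a = x := (d.rho_zero a).symm.trans (d.rho_eq_of_tau_ne_zero _ h)
  exact h (ha ▸ d.tau_basepoint 0)

theorem tau_one_of_mem_closure {a : X} (ha : a ∈ closure {x}) : d.tau (a, 1) = 1 := by
  have hcont : Continuous fun b : X => d.tau (b, 1) := by fun_prop
  have := image_closure_subset_closure_image hcont ⟨a, ha, rfl⟩
  rwa [image_singleton, d.tau_basepoint, closure_singleton, mem_singleton_iff] at this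

theorem tau_eq_zero_and_rho_eq_of_mem_frontier [T1Space X] {A : Type} [TopologicalSpace A]
    {f : A → X × I} (hf : Continuous f) {a : A} (ha : a ∈ frontier {b | d.tau (f b) = 0}) :
    d.tau (f a) = 0 ∧ d.rho (f a) = x := by
  rw [frontier_eq_closure_inter_closure] at ha
  have hτ : Continuous fun b => d.tau (f b) := by fun_prop
  have hρ : Continuous fun b => d.rho (f b) := by fun_prop
  exact ⟨closure_minimal subset_rfl (isClosed_singleton.preimage hτ) ha.1,
    closure_minimal (fun b hb => d.rho_eq_of_tau_ne_zero _ hb)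
      (isClosed_singleton.preimage hρ) ha.2⟩

end BasepointNDR

namespace SphereN

variable {n : ℕ}

instance : MetricSpace (SphereN n) :=
  inferInstanceAs (MetricSpace (Metric.sphere _ _))

local notation "E" n => EuclideanSpace ℝ (Fin (n + 1))

theorem norm_val (s : SphereN n) : ‖(s.1 : E n)‖ = 1 := by
  simpa using s.2

def height (s : SphereN n) : ℝ :=
  inner ℝ s.1 (pt n).1

@[fun_prop]
theorem continuous_height : Continuous (height (n := n)) :=
  continuous_subtype_val.inner continuous_const

theorem height_le_one (s : SphereN n) : height s ≤ 1 := by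
  simpa [height, norm_val] using real_inner_le_norm s.1 (pt n).1

theorem height_eq_one_iff {s : SphereN n} : height s = 1 ↔ s = pt n := by
  rw [height, inner_eq_one_iff_of_norm_eq_one (norm_val s) (norm_val (pt n))]
  exact ⟨fun h => Subtype.ext h, congrArg Subtype.val⟩

theorem height_pt : height (pt n) = 1 :=
  height_eq_one_iff.mpr rfl

theorem dist_pt_sq (s : SphereN n) : dist s (pt n) ^ 2 = 2 - 2 * height s := by
  rw [show dist s (pt n) = dist s.1 (pt n).1 from rfl, dist_eq_norm, norm_sub_sq_real, norm_val,
    norm_val, height]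
  ring

/-- Vanishes at time `0` and, through `a / 0 = 0`, at the basepoint; away from the basepoint it
equals `1` once `t > 2 (1 - height s)`, i.e. where `haloTime ≠ 0`. -/
def pullWeight (p : SphereN n × I) : ℝ :=
  max 0 (min 1 (p.2 / (1 - height p.1) - 1))

theorem pullWeight_nonneg (p : SphereN n × I) : 0 ≤ pullWeight p :=
  le_max_left _ _

theorem pullWeight_le_one (p : SphereN n × I) : pullWeight p ≤ 1 :=
  max_le zero_le_one (min_le_left _ _)

theorem pullWeight_zero (s : SphereN n) : pullWeight (s, 0) = 0 := by
  simp [pullWeight]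

theorem pullWeight_pt (t : I) : pullWeight (pt n, t) = 0 := by
  simp [pullWeight, height_pt]

theorem height_pos_of_pullWeight_pos {p : SphereN n × I} (h : 0 < pullWeight p) :
    0 < height p.1 := by
  by_contra! hh
  have hd : 0 < 1 - height p.1 := by linarith
  have : p.2 / (1 - height p.1) ≤ 1 :=
    (div_le_one hd).mpr (by linarith [p.2.2.2])
  simp [pullWeight, this] at h

def pullVec (p : SphereN n × I) : E n :=
  (1 - pullWeight p) • p.1.1 + pullWeight p • (pt n).1

theorem inner_pullVec (p : SphereN n × I) :
    inner ℝ (pullVec p) (pt n).1 = (1 - pullWeight p) * height p.1 + pullWeight p := by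
  simp [pullVec, inner_add_left, real_inner_smul_left, height, norm_val]

theorem height_le_inner_pullVec (p : SphereN n × I) :
    height p.1 ≤ inner ℝ (pullVec p) (pt n).1 := by
  rw [inner_pullVec]
  nlinarith [pullWeight_nonneg p, height_le_one p.1]

theorem pullVec_of_pullWeight_eq_zero {p : SphereN n × I} (h : pullWeight p = 0) :
    pullVec p = p.1.1 := by
  simp [pullVec, h]

theorem pullVec_ne_zero (p : SphereN n × I) : pullVec p ≠ 0 := by
  rcases (pullWeight_nonneg p).eq_or_lt with h | h
  · rw [pullVec_of_pullWeight_eq_zero h.symm, ← norm_ne_zero_iff, norm_val]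
    exact one_ne_zero
  · intro h0
    have := height_le_inner_pullVec p
    rw [h0, inner_zero_left] at this
    linarith [height_pos_of_pullWeight_pos h]

theorem norm_pullVec_le_one (p : SphereN n × I) : ‖pullVec p‖ ≤ 1 := by
  refine (norm_add_le _ _).trans ?_
  rw [norm_smul, norm_smul, norm_val, norm_val, Real.norm_of_nonneg (pullWeight_nonneg p),
    Real.norm_of_nonneg (by linarith [pullWeight_le_one p])]
  linarith

def pull (p : SphereN n × I) : SphereN n :=
  ⟨‖pullVec p‖⁻¹ • pullVec p, by
    rw [Metric.mem_sphere, dist_zero_right]; exact norm_smul_inv_norm (pullVec_ne_zero p)⟩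

theorem pull_of_pullWeight_eq_zero {p : SphereN n × I} (h : pullWeight p = 0) : pull p = p.1 :=
  Subtype.ext <| by simp [pull, pullVec_of_pullWeight_eq_zero h, norm_val]

theorem height_le_height_pull (p : SphereN n × I) : height p.1 ≤ height (pull p) := by
  rcases (pullWeight_nonneg p).eq_or_lt with h | h
  · rw [pull_of_pullWeight_eq_zero h.symm]
  · have hin := height_le_inner_pullVec p
    have hpos := height_pos_of_pullWeight_pos h
    have hnorm : 0 < ‖pullVec p‖ := norm_pos_iff.mpr (pullVec_ne_zero p)
    have hinv : 1 ≤ ‖pullVec p‖⁻¹ := one_le_inv₀ hnorm |>.mpr (norm_pullVec_le_one p)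
    have : height (pull p) = ‖pullVec p‖⁻¹ * inner ℝ (pullVec p) (pt n).1 :=
      real_inner_smul_left _ _ _
    rw [this]
    nlinarith

theorem dist_pull_le (p : SphereN n × I) : dist (pull p) (pt n) ≤ dist p.1 (pt n) := by
  rw [← pow_le_pow_iff_left₀ dist_nonneg dist_nonneg two_ne_zero, dist_pt_sq, dist_pt_sq]
  linarith [height_le_height_pull p]

theorem pull_of_pullWeight_eq_one {p : SphereN n × I} (h : pullWeight p = 1) : pull p = pt n :=
  Subtype.ext <| by simp [pull, pullVec, h, norm_val]

theorem continuous_pull : Continuous (pull (n := n)) := by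
  refine continuous_iff_continuousAt.mpr fun ⟨s₀, t₀⟩ => ?_
  by_cases hs : s₀ = pt n
  · -- `pullWeight` jumps at `(pt n, 0)`, but `pull` never increases the distance to `pt n`.
    subst hs
    rw [ContinuousAt, pull_of_pullWeight_eq_zero (pullWeight_pt t₀)]
    refine tendsto_iff_dist_tendsto_zero.mpr <|
      squeeze_zero (fun _ => dist_nonneg) (fun p => dist_pull_le p) ?_
    simpa using ((continuous_fst.dist continuous_const).tendsto (pt n, t₀) :
      Filter.Tendsto (fun p : SphereN n × I => dist p.1 (pt n)) _ _)
  · have hd : 1 - height s₀ ≠ 0 := sub_ne_zero.mpr (Ne.symm (mt height_eq_one_iff.mp hs))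
    have hw : ContinuousAt pullWeight (s₀, t₀) :=
      continuousAt_const.max <| continuousAt_const.min <|
        ((continuous_subtype_val.comp continuous_snd).continuousAt.div
          (by fun_prop : Continuous fun p : SphereN n × I => 1 - height p.1).continuousAt
          hd).sub continuousAt_const
    have hv : ContinuousAt pullVec (s₀, t₀) :=
      ((continuousAt_const.sub hw).smul (by fun_prop : Continuous fun p : SphereN n × I =>
        (p.1.1 : E n)).continuousAt).add (hw.smul continuousAt_const)
    exact ((hv.norm.inv₀ (norm_ne_zero_iff.mpr (pullVec_ne_zero _))).smul hv).codRestrict _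

def haloTime : C(SphereN n × I, I) :=
  ⟨fun p => projIcc 0 1 zero_le_one (p.2 - 2 * (1 - height p.1)), by fun_prop⟩

theorem pull_of_haloTime_ne_zero {p : SphereN n × I} (hp : haloTime p ≠ 0) : pull p = pt n := by
  obtain ⟨s, t⟩ := p
  have hpos : 0 < (t : ℝ) - 2 * (1 - height s) := by
    by_contra! h
    exact hp (Subtype.ext (by simp [haloTime, projIcc_of_le_left _ h]))
  rcases (height_le_one s).eq_or_lt with h1 | h1
  · obtain rfl := height_eq_one_iff.mp h1
    exact pull_of_pullWeight_eq_zero (pullWeight_pt t)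
  · refine pull_of_pullWeight_eq_one ?_
    have hd : 0 < 1 - height s := by linarith
    have : 1 ≤ (t : ℝ) / (1 - height s) - 1 := by
      rw [le_sub_iff_add_le, le_div_iff₀ hd]; linarith
    simp [pullWeight, min_eq_left this]

def basepointNDR (n : ℕ) : BasepointNDR (SphereN n) (pt n) where
  rho := ⟨pull, continuous_pull⟩
  tau := haloTime
  rho_zero s := pull_of_pullWeight_eq_zero (pullWeight_zero s)
  rho_basepoint t := pull_of_pullWeight_eq_zero (pullWeight_pt t)
  tau_basepoint t := by simp [haloTime, height_pt]
  rho_eq_of_tau_ne_zero _ hp := pull_of_haloTime_ne_zero hp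

end SphereN

namespace BasepointNDR

variable {X : Type} [TopologicalSpace X] {x : X} (d : BasepointNDR X x)

/-- `extendPath (γ, v)` runs through `γ` and then along the track `rho (γ 1, ·)` up to time
`v`, reparametrised to `I`. -/
def extendPath : C(C(I, X) × I, C(I, X)) :=
  ContinuousMap.curry
    { toFun := fun p =>
        if p.2 * (1 + p.1.2 : ℝ) ≤ 1 then p.1.1 (projIcc 0 1 zero_le_one (p.2 * (1 + p.1.2)))
        else d.rho (p.1.1 1, projIcc 0 1 zero_le_one (p.2 * (1 + p.1.2) - 1))
      continuous_toFun := by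
        refine Continuous.if_le ?_ ?_ (by fun_prop) continuous_const ?_
        · fun_prop
        · fun_prop
        · intro p hp
          simp [hp, d.rho_zero] }

@[simp]
theorem extendPath_apply_zero (γ : C(I, X)) (v : I) : d.extendPath (γ, v) 0 = γ 0 := by
  simp [extendPath]

@[simp]
theorem extendPath_apply_one (γ : C(I, X)) (v : I) : d.extendPath (γ, v) 1 = d.rho (γ 1, v) := by
  rcases eq_or_ne v 0 with rfl | hv
  · simp [extendPath, d.rho_zero]
  · have : ¬ (1 + (v : ℝ) ≤ 1) := by
      have := unitInterval.pos_iff_ne_zero.mpr hv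
      simpa using this
    simp [extendPath, this]

@[simp]
theorem extendPath_zero (γ : C(I, X)) : d.extendPath (γ, 0) = γ := by
  ext t
  simp [extendPath, t.2.2]

end BasepointNDR

namespace PathsFrom

variable {X : Type} [TopologicalSpace X] {y : X}

def restrictPrefix : C(PathsFrom X y × I, PathsFrom X y) :=
  ⟨fun p => ⟨⟨fun t => p.1.1 (p.2 * t), by fun_prop⟩, by simpa using p.1.2⟩,
    Continuous.subtype_mk (ContinuousMap.curry
      ⟨fun q : (PathsFrom X y × I) × I => q.1.1.1 (q.1.2 * q.2), by fun_prop⟩).continuous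
      fun p => by simpa using p.1.2⟩

theorem restrictPrefix_apply (γ : PathsFrom X y) (v t : I) :
    (restrictPrefix (γ, v)).1 t = γ.1 (v * t) :=
  rfl

@[simp]
theorem restrictPrefix_one (γ : PathsFrom X y) : restrictPrefix (γ, 1) = γ :=
  Subtype.ext <| ContinuousMap.ext fun t => by simp [restrictPrefix_apply]

theorem restrictPrefix_zero (γ γ' : PathsFrom X y) :
    restrictPrefix (γ, 0) = restrictPrefix (γ', 0) :=
  Subtype.ext <| ContinuousMap.ext fun t => by simp [restrictPrefix_apply, γ.2, γ'.2]

end PathsFrom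

def PathsFromTo.toPathsFrom {X : Type} [TopologicalSpace X] {y x : X} (δ : PathsFromTo X y x) :
    PathsFrom X y :=
  ⟨δ.1, δ.2.1⟩

@[fun_prop]
theorem PathsFromTo.continuous_toPathsFrom {X : Type} [TopologicalSpace X] {y x : X} :
    Continuous (PathsFromTo.toPathsFrom (X := X) (y := y) (x := x)) :=
  continuous_subtype_val.subtype_mk _

def PathsFrom.toPathsFromTo {X : Type} [TopologicalSpace X] {y x : X} (γ : PathsFrom X y)
    (h : γ.1 1 = x) : PathsFromTo X y x :=
  ⟨γ.1, γ.2, h⟩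

namespace WedgeSphere

variable {X : Type} [TopologicalSpace X] {x : X} {n : ℕ} {Z : Type} [TopologicalSpace Z]

def inl : C(X, WedgeSphere X x n) :=
  ⟨fun a => Quot.mk _ (.inl a), continuous_quot_mk.comp continuous_inl⟩

def inr : C(SphereN n, WedgeSphere X x n) :=
  ⟨fun s => Quot.mk _ (.inr s), continuous_quot_mk.comp continuous_inr⟩

theorem inl_basepoint : (inl x : WedgeSphere X x n) = inr (SphereN.pt n) :=
  Quot.sound (.inr ⟨.inl rfl, .inr rfl⟩)

@[elab_as_elim]
theorem ind {P : WedgeSphere X x n → Prop} (hl : ∀ a, P (inl a)) (hr : ∀ s, P (inr s))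
    (w : WedgeSphere X x n) : P w :=
  Quot.ind (Sum.rec hl hr) w

def desc (f : C(X, Z)) (g : C(SphereN n, Z)) (h : f x = g (SphereN.pt n)) :
    C(WedgeSphere X x n, Z) where
  toFun := Quot.lift (Sum.elim f g) <| by
    rintro p q (rfl | ⟨hp | hp, hq | hq⟩) <;> subst_vars <;> simp [h]
  continuous_toFun := continuous_quot_lift _ (f.continuous.sumElim g.continuous)

def toSphere : C(WedgeSphere X x n, SphereN n) :=
  desc (.const _ (SphereN.pt n)) (.id _) rfl

theorem toSphere_eq_pt {w : WedgeSphere X x n} (hw : wedgeSphereRetr X x n w ≠ x) :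
    toSphere w = SphereN.pt n := by
  induction w using ind with
  | hl a => rfl
  | hr s => exact absurd rfl hw

end WedgeSphere

namespace PathsGlue

variable {X : Type} [TopologicalSpace X] {y x : X} {n : ℕ} {Z : Type} [TopologicalSpace Z]

def inl : C(PathsFrom X y, PathsGlue X y x n) :=
  ⟨fun γ => Quot.mk _ (.inl γ), continuous_quot_mk.comp continuous_inl⟩

def inr : C(PathsFromTo X y x × SphereN n, PathsGlue X y x n) :=
  ⟨fun p => Quot.mk _ (.inr p), continuous_quot_mk.comp continuous_inr⟩

theorem inr_pt (δ : PathsFromTo X y x) :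
    (inr (δ, SphereN.pt n) : PathsGlue X y x n) = inl δ.toPathsFrom :=
  Quot.sound (.inr ⟨δ, rfl, rfl⟩)

@[elab_as_elim]
theorem ind {P : PathsGlue X y x n → Prop} (hl : ∀ γ, P (inl γ)) (hr : ∀ p, P (inr p))
    (z : PathsGlue X y x n) : P z :=
  Quot.ind (Sum.rec hl hr) z

def desc (f : C(PathsFrom X y, Z)) (g : C(PathsFromTo X y x × SphereN n, Z))
    (h : ∀ δ, g (δ, SphereN.pt n) = f δ.toPathsFrom) : C(PathsGlue X y x n, Z) where
  toFun := Quot.lift (Sum.elim f g) <| by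
    rintro p q (rfl | ⟨δ, rfl, rfl⟩)
    exacts [rfl, h δ]
  continuous_toFun := continuous_quot_lift _ (f.continuous.sumElim g.continuous)

@[simp]
theorem desc_inl (f : C(PathsFrom X y, Z)) (g : C(PathsFromTo X y x × SphereN n, Z))
    (h : ∀ δ, g (δ, SphereN.pt n) = f δ.toPathsFrom) (γ : PathsFrom X y) :
    desc f g h (inl γ) = f γ :=
  rfl

@[simp]
theorem desc_inr (f : C(PathsFrom X y, Z)) (g : C(PathsFromTo X y x × SphereN n, Z))
    (h : ∀ δ, g (δ, SphereN.pt n) = f δ.toPathsFrom) (p : PathsFromTo X y x × SphereN n) :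
    desc f g h (inr p) = g p :=
  rfl

end PathsGlue

namespace HalfSmash

variable {Y : Type} [TopologicalSpace Y] {n : ℕ} {Z : Type} [TopologicalSpace Z]

def mk : C(Y × SphereN n, HalfSmash Y n) :=
  ⟨Quot.mk _, continuous_quot_mk⟩

theorem mk_pt (a b : Y) : (mk (a, SphereN.pt n) : HalfSmash Y n) = mk (b, SphereN.pt n) :=
  Quot.sound (.inr ⟨rfl, rfl⟩)

@[elab_as_elim]
theorem ind {P : HalfSmash Y n → Prop} (h : ∀ p, P (mk p)) (z : HalfSmash Y n) : P z :=
  Quot.ind h z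

def desc (f : C(Y × SphereN n, Z)) (h : ∀ a b, f (a, SphereN.pt n) = f (b, SphereN.pt n)) :
    C(HalfSmash Y n, Z) where
  toFun := Quot.lift f <| by
    rintro ⟨a, s⟩ ⟨b, t⟩ (heq | ⟨hs, ht⟩)
    · exact congrArg f heq
    · dsimp only at hs ht
      subst hs ht
      exact h a b
  continuous_toFun := continuous_quot_lift _ f.continuous

end HalfSmash

def PathsGlue.toHoFib {X : Type} [TopologicalSpace X] {y x : X} {n : ℕ} :
    C(PathsGlue X y x n, HoFib (wedgeSphereRetr X x n) y) :=
  PathsGlue.desc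
    ⟨fun γ => ⟨(WedgeSphere.inl (γ.1 1), γ.1), γ.2, rfl⟩, by fun_prop⟩
    ⟨fun p => ⟨(WedgeSphere.inr p.2, p.1.1), p.1.2.1, p.1.2.2⟩, by fun_prop⟩
    fun δ => Subtype.ext <| Prod.ext
      (show WedgeSphere.inr _ = WedgeSphere.inl (δ.1 1) by rw [δ.2.2, WedgeSphere.inl_basepoint])
      rfl

namespace BasepointNDR

variable {X : Type} [TopologicalSpace X] {x y : X} {n : ℕ} (d : BasepointNDR X x)

def extendPathsFrom : C(PathsFrom X y × I, PathsFrom X y) :=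
  ⟨fun p => ⟨d.extendPath (p.1.1, p.2), by simp [p.1.2]⟩, by fun_prop⟩

def extendPathsFromTo : C(PathsFromTo X y x × I, PathsFromTo X y x) :=
  ⟨fun p => ⟨d.extendPath (p.1.1, p.2), by simp [p.1.2.1], by simp [p.1.2.2, d.rho_basepoint]⟩,
    by fun_prop⟩

@[simp]
theorem extendPathsFrom_zero (γ : PathsFrom X y) : d.extendPathsFrom (γ, 0) = γ :=
  Subtype.ext (d.extendPath_zero γ.1)

@[simp]
theorem extendPathsFromTo_zero (δ : PathsFromTo X y x) : d.extendPathsFromTo (δ, 0) = δ :=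
  Subtype.ext (d.extendPath_zero δ.1)

def hoFibPath (q : HoFib (wedgeSphereRetr X x n) y) : PathsFrom X y :=
  d.extendPathsFrom (⟨q.1.2, q.2.1⟩, 1)

@[fun_prop]
theorem continuous_hoFibPath : Continuous (d.hoFibPath (n := n) (y := y)) := by
  unfold hoFibPath; fun_prop

theorem hoFibPath_apply_one (q : HoFib (wedgeSphereRetr X x n) y) :
    (d.hoFibPath q).1 1 = d.rho (q.1.2 1, 1) :=
  d.extendPath_apply_one _ _

theorem hoFibPath_apply_one_of_eq {q : HoFib (wedgeSphereRetr X x n) y} (hq : q.1.2 1 = x) :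
    (d.hoFibPath q).1 1 = x := by
  rw [hoFibPath_apply_one, hq, d.rho_basepoint]

open Classical in
def hoFibToPathsGlueFun (q : HoFib (wedgeSphereRetr X x n) y) : PathsGlue X y x n :=
  if h : (d.hoFibPath q).1 1 = x then
    PathsGlue.inr ((d.hoFibPath q).toPathsFromTo h, WedgeSphere.toSphere q.1.1)
  else PathsGlue.inl (d.hoFibPath q)

theorem hoFibToPathsGlueFun_of_toSphere_eq {q : HoFib (wedgeSphereRetr X x n) y}
    (hq : WedgeSphere.toSphere q.1.1 = SphereN.pt n) :
    d.hoFibToPathsGlueFun q = PathsGlue.inl (d.hoFibPath q) := by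
  unfold hoFibToPathsGlueFun
  split_ifs with h
  · rw [hq, PathsGlue.inr_pt]; rfl
  · rfl

/-- Near a point whose endpoint lies in `closure {x}`, the halo `tau (·, 1) ≠ 0` forces the
extended path to end at `x`; away from `closure {x}` the point lies on the `X`-summand. -/
theorem continuous_hoFibToPathsGlueFun :
    Continuous (d.hoFibToPathsGlueFun (n := n) (y := y)) := by
  have hend : Continuous fun q : HoFib (wedgeSphereRetr X x n) y => q.1.2 1 := by fun_prop
  refine continuous_iff_continuousAt.mpr fun q => ?_
  by_cases hq : q.1.2 1 ∈ closure {x}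
  · set V := {q : HoFib (wedgeSphereRetr X x n) y | d.tau (q.1.2 1, 1) ≠ 0}
    have hV : V ∈ 𝓝 q := (isOpen_ne_fun (by fun_prop) continuous_const).mem_nhds
      (by simp [d.tau_one_of_mem_closure hq])
    have hx (q' : V) : (d.hoFibPath q'.1).1 1 = x := by
      rw [hoFibPath_apply_one]; exact d.rho_eq_of_tau_ne_zero _ q'.2
    have hrestrict : V.domRestrict d.hoFibToPathsGlueFun = fun q =>
        PathsGlue.inr ((d.hoFibPath q.1).toPathsFromTo (hx q), WedgeSphere.toSphere q.1.1.1) :=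
      funext fun q' => dif_pos (hx q')
    refine (continuousOn_iff_continuous_domRestrict.mpr ?_).continuousAt hV
    rw [hrestrict]
    exact PathsGlue.inr.continuous.comp <| (Continuous.subtype_mk (by fun_prop) _).prodMk
      (by fun_prop)
  · have hV : {q : HoFib (wedgeSphereRetr X x n) y | q.1.2 1 ∉ closure {x}} ∈ 𝓝 q :=
      (isClosed_closure.isOpen_compl.preimage hend).mem_nhds hq
    refine ContinuousAt.congr (f := fun q => PathsGlue.inl (d.hoFibPath q)) (by fun_prop) ?_
    filter_upwards [hV] with q' hq'
    refine (d.hoFibToPathsGlueFun_of_toSphere_eq (WedgeSphere.toSphere_eq_pt ?_)).symm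
    rw [← q'.2.2]
    rintro h
    exact hq' (h.symm ▸ subset_closure (mem_singleton x))

def hoFibToPathsGlue : C(HoFib (wedgeSphereRetr X x n) y, PathsGlue X y x n) :=
  ⟨d.hoFibToPathsGlueFun, d.continuous_hoFibToPathsGlueFun⟩

def wedgeDeformation : C(WedgeSphere X x n, C(I, WedgeSphere X x n)) :=
  WedgeSphere.desc (ContinuousMap.curry (WedgeSphere.inl.comp d.rho))
    (ContinuousMap.const'.comp WedgeSphere.inr)
    (by ext t; simp [d.rho_basepoint, WedgeSphere.inl_basepoint])

theorem retr_wedgeDeformation (w : WedgeSphere X x n) (t : I) :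
    wedgeSphereRetr X x n (d.wedgeDeformation w t) = d.rho (wedgeSphereRetr X x n w, t) := by
  induction w using WedgeSphere.ind with
  | hl a => rfl
  | hr s => exact (d.rho_basepoint t).symm

theorem wedgeDeformation_zero (w : WedgeSphere X x n) : d.wedgeDeformation w 0 = w := by
  induction w using WedgeSphere.ind with
  | hl a => exact congrArg WedgeSphere.inl (d.rho_zero a)
  | hr s => rfl

theorem toHoFib_hoFibToPathsGlue (q : HoFib (wedgeSphereRetr X x n) y) :
    PathsGlue.toHoFib (d.hoFibToPathsGlue q) =
      ⟨(d.wedgeDeformation q.1.1 1, d.extendPath (q.1.2, 1)), by simp [q.2.1],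
        by simp [d.retr_wedgeDeformation, q.2.2]⟩ := by
  obtain ⟨⟨w, γ⟩, hγ₀, hγ₁⟩ := q
  induction w using WedgeSphere.ind with
  | hl a =>
    obtain rfl : γ 1 = a := hγ₁
    simp only [hoFibToPathsGlue, ContinuousMap.coe_mk]
    rw [d.hoFibToPathsGlueFun_of_toSphere_eq (q := ⟨(WedgeSphere.inl (γ 1), γ), hγ₀, rfl⟩) rfl]
    exact Subtype.ext (Prod.ext (congrArg WedgeSphere.inl (d.hoFibPath_apply_one _)) rfl)
  | hr s =>
    simp only [hoFibToPathsGlue, ContinuousMap.coe_mk, hoFibToPathsGlueFun,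
      dif_pos (d.hoFibPath_apply_one_of_eq (q := ⟨(WedgeSphere.inr s, γ), hγ₀, hγ₁⟩) hγ₁)]
    rfl

def hoFibDeformation :
    C(HoFib (wedgeSphereRetr X x n) y, C(I, HoFib (wedgeSphereRetr X x n) y)) :=
  ContinuousMap.curry
    ⟨fun p => ⟨(d.wedgeDeformation p.1.1.1 p.2, d.extendPath (p.1.1.2, p.2)), by simp [p.1.2.1],
      by simp [retr_wedgeDeformation, p.1.2.2]⟩, by fun_prop⟩

def pathsGlueDeformation : C(PathsGlue X y x n, C(I, PathsGlue X y x n)) :=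
  PathsGlue.desc (ContinuousMap.curry (PathsGlue.inl.comp d.extendPathsFrom))
    (ContinuousMap.curry <| PathsGlue.inr.comp
      ⟨fun p => (d.extendPathsFromTo (p.1.1, p.2), p.1.2), by fun_prop⟩)
    fun δ => by ext t; exact PathsGlue.inr_pt _

theorem pathsGlueDeformation_one (z : PathsGlue X y x n) :
    d.pathsGlueDeformation z 1 = d.hoFibToPathsGlue (PathsGlue.toHoFib z) := by
  induction z using PathsGlue.ind with
  | hl γ => exact (d.hoFibToPathsGlueFun_of_toSphere_eq (q := PathsGlue.toHoFib (.inl γ)) rfl).symm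
  | hr p =>
    change _ = d.hoFibToPathsGlueFun _
    rw [hoFibToPathsGlueFun, dif_pos (d.hoFibPath_apply_one_of_eq p.1.2.2)]
    rfl

def hoFibEquivPathsGlue : HoFib (wedgeSphereRetr X x n) y ≃ₕ PathsGlue X y x n where
  toFun := d.hoFibToPathsGlue
  invFun := PathsGlue.toHoFib
  left_inv := .symm <| ContinuousMap.homotopic_of_curry d.hoFibDeformation
    (fun q => Subtype.ext (Prod.ext (d.wedgeDeformation_zero _) (d.extendPath_zero _)))
    (fun q => (d.toHoFib_hoFibToPathsGlue q).symm)
  right_inv := .symm <| ContinuousMap.homotopic_of_curry d.pathsGlueDeformation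
    (fun z => by induction z using PathsGlue.ind <;> simp [pathsGlueDeformation])
    d.pathsGlueDeformation_one

end BasepointNDR

def PathsGlue.collapse {X : Type} [TopologicalSpace X] {y x : X} {n : ℕ}
    (γ₀ : PathsFromTo X y x) : C(PathsGlue X y x n, HalfSmash (PathsFromTo X y x) n) :=
  PathsGlue.desc (.const _ (HalfSmash.mk (γ₀, SphereN.pt n))) HalfSmash.mk
    fun δ => HalfSmash.mk_pt δ γ₀

namespace BasepointNDR

variable {X : Type} [TopologicalSpace X] {x y : X} {n : ℕ}
  (e : BasepointNDR (SphereN n) (SphereN.pt n))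

/-- A homotopy from `PathsGlue.inr` that pinches the halo of the basepoint of `Sⁿ` onto the
basepoint, letting the path run back to `y` on the pinched part. -/
def pinch : C((PathsFromTo X y x × SphereN n) × I, PathsGlue X y x n) where
  toFun p :=
    if e.tau (p.1.2, p.2) = 0 then PathsGlue.inr (p.1.1, e.rho (p.1.2, p.2))
    else PathsGlue.inl (PathsFrom.restrictPrefix (p.1.1.toPathsFrom, σ (e.tau (p.1.2, p.2))))
  continuous_toFun := by
    refine Continuous.if (fun p hp => ?_) (by fun_prop) (by fun_prop)
    obtain ⟨hτ, hρ⟩ := e.tau_eq_zero_and_rho_eq_of_mem_frontier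
      (f := fun p : (PathsFromTo X y x × SphereN n) × I => (p.1.2, p.2)) (by fun_prop) hp
    simp [hτ, hρ, PathsGlue.inr_pt]

theorem pinch_zero (p : PathsFromTo X y x × SphereN n) : e.pinch (p, 0) = PathsGlue.inr p := by
  simp [pinch, e.tau_zero, e.rho_zero]

theorem pinch_pt (δ : PathsFromTo X y x) (t : I) :
    e.pinch ((δ, SphereN.pt n), t) =
      PathsGlue.inl (PathsFrom.restrictPrefix (δ.toPathsFrom, σ t)) := by
  rcases eq_or_ne t 0 with rfl | ht
  · simp [pinch, e.tau_basepoint, e.rho_basepoint, PathsGlue.inr_pt]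
  · simp [pinch, e.tau_basepoint, ht]

theorem collapse_pinch_pt (γ₀ δ : PathsFromTo X y x) (t : I) :
    PathsGlue.collapse γ₀ (e.pinch ((δ, SphereN.pt n), t)) = HalfSmash.mk (γ₀, SphereN.pt n) := by
  rw [pinch_pt]; rfl

def halfSmashToPathsGlue : C(HalfSmash (PathsFromTo X y x) n, PathsGlue X y x n) :=
  HalfSmash.desc (e.pinch.comp ⟨fun p => (p, 1), by fun_prop⟩) fun δ δ' => by
    simp only [ContinuousMap.comp_apply, ContinuousMap.coe_mk, pinch_pt, symm_one,
      PathsFrom.restrictPrefix_zero δ.toPathsFrom δ'.toPathsFrom]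

def pathsGlueContraction : C(PathsGlue X y x n, C(I, PathsGlue X y x n)) :=
  PathsGlue.desc
    (ContinuousMap.curry <| PathsGlue.inl.comp <| PathsFrom.restrictPrefix.comp
      ⟨fun p => (p.1, σ p.2), by fun_prop⟩)
    (ContinuousMap.curry e.pinch)
    fun δ => by ext t; exact e.pinch_pt δ t

theorem pathsGlueContraction_one (γ₀ : PathsFromTo X y x) (z : PathsGlue X y x n) :
    e.pathsGlueContraction z 1 = e.halfSmashToPathsGlue (PathsGlue.collapse γ₀ z) := by
  induction z using PathsGlue.ind with
  | hl γ =>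
    change PathsGlue.inl (PathsFrom.restrictPrefix (γ, σ 1)) = e.pinch ((γ₀, SphereN.pt n), 1)
    rw [e.pinch_pt, symm_one, PathsFrom.restrictPrefix_zero γ γ₀.toPathsFrom]
  | hr p => rfl

def halfSmashDeformation (γ₀ : PathsFromTo X y x) :
    C(HalfSmash (PathsFromTo X y x) n, C(I, HalfSmash (PathsFromTo X y x) n)) :=
  HalfSmash.desc (ContinuousMap.curry ((PathsGlue.collapse γ₀).comp e.pinch)) fun δ δ' => by
    ext t
    simp only [ContinuousMap.curry_apply, ContinuousMap.comp_apply, collapse_pinch_pt]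

def pathsGlueEquivHalfSmash (γ₀ : PathsFromTo X y x) :
    PathsGlue X y x n ≃ₕ HalfSmash (PathsFromTo X y x) n where
  toFun := PathsGlue.collapse γ₀
  invFun := e.halfSmashToPathsGlue
  left_inv := .symm <| ContinuousMap.homotopic_of_curry e.pathsGlueContraction
    (fun z => by
      induction z using PathsGlue.ind with
      | hl γ => simp [pathsGlueContraction]
      | hr p => exact e.pinch_zero p)
    (e.pathsGlueContraction_one γ₀)
  right_inv := .symm <| ContinuousMap.homotopic_of_curry (e.halfSmashDeformation γ₀)
    (fun z => by
      induction z using HalfSmash.ind with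
      | h p => exact congrArg (PathsGlue.collapse γ₀) (e.pinch_zero p))
    (fun z => by
      induction z using HalfSmash.ind with
      | h p => rfl)

end BasepointNDR

/-- for a well-pointed path-connected space `(X, x)` and `y ∈ X`, the
homotopy fiber over `y` of the retraction `X ∨ₓ Sⁿ → X` is homotopy equivalent to
`P_y(X) ∪_{P_y^x(X)} (P_y^x(X) × Sⁿ)`, which in turn is homotopy equivalent to the
half-smash `Σⁿ (P_y^x(X)₊)`; consequently each space of the Goodwillie derivative of the
identity functor is homotopy equivalent to the corresponding space of the suspension
spectrum `Σ^∞ P_y^x(X)₊`. -/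
theorem identity_derivative (X : Type) [TopologicalSpace X] (x : X)
    (hwp : NondegBasepoint X x) (hpc : PathConnectedSpace X) (y : X) :
    ∀ n : ℕ,
      Nonempty (ContinuousMap.HomotopyEquiv
        (HoFib (wedgeSphereRetr X x n) y) (PathsGlue X y x n)) ∧
      Nonempty (ContinuousMap.HomotopyEquiv
        (PathsGlue X y x n) (HalfSmash (PathsFromTo X y x) n)) ∧
      Nonempty (ContinuousMap.HomotopyEquiv
        (HoFib (wedgeSphereRetr X x n) y) (HalfSmash (PathsFromTo X y x) n)) := by
  intro n
  obtain ⟨d⟩ := hwp.nonempty_basepointNDR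
  obtain ⟨γ⟩ := hpc.joined y x
  let γ₀ : PathsFromTo X y x := ⟨γ.toContinuousMap, γ.source, γ.target⟩
  let e₁ := d.hoFibEquivPathsGlue (y := y) (n := n)
  let e₂ := (SphereN.basepointNDR n).pathsGlueEquivHalfSmash γ₀
  exact ⟨⟨e₁⟩, ⟨e₂⟩, ⟨e₁.trans e₂⟩⟩
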